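/- Let ρ^{AB} be a density matrix on C^{d_A} ⊗ C^{d_B} with √(ρ^{AB}) = Σ_{u,v} X_{uv} ⊗ |u⟩⟨v|, and let {|b_{ti}⟩} be a complete set of d_A+1 MUBs of C^{d_A} satisfying Σ_{t,i} P_{ti} ⊗ P_{ti} = 1⊗1 + F with P_{ti} = |b_{ti}⟩⟨b_{ti}|. Then Σ_{t,i} I(ρ^{AB}, P_{ti} ⊗ 1_B) = d_A − tr[(tr_A √(ρ^{AB}))²]. -/

import Mathlib

open Matrix Finset Kronecker ComplexOrder

/-- The square root of a positive semidefinite matrix, as `Matrix.PosSemidef.sqrt` was defined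
in Mathlib of December 2024 (removed since). -/
noncomputable def Matrix.PosSemidef.sqrt {n : Type*} [Fintype n] [DecidableEq n]
    {A : Matrix n n ℂ} (hA : A.PosSemidef) : Matrix n n ℂ :=
  hA.1.eigenvectorUnitary.1 * diagonal ((↑) ∘ (√·) ∘ hA.1.eigenvalues) *
    (star hA.1.eigenvectorUnitary : Matrix n n ℂ)

/-- The Wigner–Yanase skew information `I(ρ, O) = -(1/2) tr([√ρ, O]²)`. -/
noncomputable def skewInfo {n : Type*} [Fintype n] [DecidableEq n]
    (ρ : Matrix n n ℂ) (hρ : ρ.PosSemidef) (O : Matrix n n ℂ) : ℂ :=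
  -(1 / 2 : ℂ) * ((hρ.sqrt * O - O * hρ.sqrt) ^ 2).trace

/-- Partial trace over the second tensor factor. -/
noncomputable def trB {dA dB : ℕ} (M : Matrix (Fin dA × Fin dB) (Fin dA × Fin dB) ℂ) :
    Matrix (Fin dA) (Fin dA) ℂ :=
  Matrix.of fun i j => ∑ u : Fin dB, M (i, u) (j, u)

/-- Partial trace over the first tensor factor. -/
noncomputable def trA {dA dB : ℕ} (M : Matrix (Fin dA × Fin dB) (Fin dA × Fin dB) ℂ) :
    Matrix (Fin dB) (Fin dB) ℂ :=
  Matrix.of fun u v => ∑ i : Fin dA, M (i, u) (i, v)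

theorem Matrix.PosSemidef.sqrt_mul_self {n : Type*} [Fintype n] [DecidableEq n]
    {A : Matrix n n ℂ} (hA : A.PosSemidef) : hA.sqrt * hA.sqrt = A := by
  have hU : (star hA.1.eigenvectorUnitary : Matrix n n ℂ) * hA.1.eigenvectorUnitary.1 = 1 :=
    Unitary.coe_star_mul_self _
  conv_rhs => rw [hA.1.spectral_theorem]
  rw [Matrix.PosSemidef.sqrt, Unitary.conjStarAlgAut_apply]
  have hD : diagonal ((↑) ∘ (√·) ∘ hA.1.eigenvalues) * diagonal ((↑) ∘ (√·) ∘ hA.1.eigenvalues)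
      = diagonal (RCLike.ofReal ∘ hA.1.eigenvalues : n → ℂ) := by
    rw [diagonal_mul_diagonal]
    congr 1; funext i
    simp only [Function.comp_apply]
    rw [← Complex.ofReal_mul, Real.mul_self_sqrt (hA.eigenvalues_nonneg i)]
    rfl
  calc _ = hA.1.eigenvectorUnitary.1 * diagonal ((↑) ∘ (√·) ∘ hA.1.eigenvalues) *
      ((star hA.1.eigenvectorUnitary : Matrix n n ℂ) * hA.1.eigenvectorUnitary.1) *
      diagonal ((↑) ∘ (√·) ∘ hA.1.eigenvalues) * (star hA.1.eigenvectorUnitary : Matrix n n ℂ) := by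
        simp only [Matrix.mul_assoc]
    _ = _ := by rw [hU, Matrix.mul_one, Matrix.mul_assoc (hA.1.eigenvectorUnitary.1 : Matrix n n ℂ), hD]

private theorem swap3' {α β γ : Type*} [Fintype α] [Fintype β] [Fintype γ] (f : α → β → γ → ℂ) :
    (∑ t : α, ∑ i : β, ∑ c : γ, f t i c) = ∑ c : γ, ∑ t : α, ∑ i : β, f t i c := by
  calc (∑ t : α, ∑ i : β, ∑ c : γ, f t i c)
      = ∑ t : α, ∑ c : γ, ∑ i : β, f t i c :=
        Finset.sum_congr rfl fun t _ => Finset.sum_comm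
    _ = ∑ c : γ, ∑ t : α, ∑ i : β, f t i c := Finset.sum_comm

private theorem skewInfo_eq {n : Type*} [Fintype n] [DecidableEq n]
    (ρ : Matrix n n ℂ) (hρ : ρ.PosSemidef) (O : Matrix n n ℂ) :
    skewInfo ρ hρ O
      = (O * O * ρ).trace - (hρ.sqrt * O * hρ.sqrt * O).trace := by
  set S := hρ.sqrt with hS
  have h2 : S * S = ρ := hρ.sqrt_mul_self
  clear_value S
  have hexp : (S * O - O * S) ^ 2
      = S*O*S*O - S*O*O*S - O*S*S*O + O*S*O*S := by noncomm_ring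
  have e1 : (S*O*O*S).trace = (O*O*ρ).trace := by
    calc (S*O*O*S).trace = ((S*S)*(O*O)).trace := by
          rw [trace_mul_comm (S*O*O) S]; congr 1; noncomm_ring
      _ = ((O*O)*(S*S)).trace := trace_mul_comm _ _
      _ = (O*O*ρ).trace := by rw [h2]
  have e2 : (O*S*S*O).trace = (O*O*ρ).trace := by
    calc (O*S*S*O).trace = ((O*O)*(S*S)).trace := by
          rw [trace_mul_comm (O*S*S) O]; congr 1; noncomm_ring
      _ = (O*O*ρ).trace := by rw [h2]
  have e3 : (O*S*O*S).trace = (S*O*S*O).trace := by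
    rw [trace_mul_comm (O*S*O) S]; congr 1; noncomm_ring
  rw [skewInfo, ← hS, hexp, trace_add, trace_sub, trace_sub, e1, e2, e3]
  ring

private theorem sum_kron {α : Type*} [Fintype α] {dA dB : ℕ}
    (f : α → Matrix (Fin dA) (Fin dA) ℂ) (B : Matrix (Fin dB) (Fin dB) ℂ) :
    (∑ x : α, f x) ⊗ₖ B = ∑ x : α, (f x) ⊗ₖ B := by
  ext p q
  simp [Matrix.sum_apply, kroneckerMap_apply, Finset.sum_mul]

private theorem trace_one_kron {dA dB : ℕ}
    (S : Matrix (Fin dA × Fin dB) (Fin dA × Fin dB) ℂ)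
    (M : Matrix (Fin dB) (Fin dB) ℂ) :
    (S * ((1 : Matrix (Fin dA) (Fin dA) ℂ) ⊗ₖ M)).trace = (trA S * M).trace := by
  simp only [Matrix.trace, Matrix.diag, Matrix.mul_apply, kroneckerMap_apply,
    Matrix.one_apply, trA, Matrix.of_apply, Fintype.sum_prod_type, Finset.sum_mul,
    mul_ite, ite_mul, mul_zero, zero_mul, mul_one, one_mul, Finset.sum_ite_irrel,
    Finset.sum_const_zero, Finset.sum_ite_eq, Finset.sum_ite_eq']
  rw [swap3', swap3']
  simp only [Finset.mem_univ, if_true]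
  rw [swap3']

theorem sum_skewInfo_global_mub (dA dB : ℕ)
    (ρAB : Matrix (Fin dA × Fin dB) (Fin dA × Fin dB) ℂ)
    (hρAB : ρAB.PosSemidef) (htr : ρAB.trace = 1)
    (b : Fin (dA + 1) → Fin dA → Fin dA → ℂ)
    (hsum : ∑ t : Fin (dA + 1), ∑ i : Fin dA, vecMulVec (b t i) (star (b t i))
      = ((dA : ℂ) + 1) • (1 : Matrix (Fin dA) (Fin dA) ℂ))
    (hdesign : ∑ t : Fin (dA + 1), ∑ i : Fin dA,
        (vecMulVec (b t i) (star (b t i))) ⊗ₖ (vecMulVec (b t i) (star (b t i)))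
      = (1 : Matrix (Fin dA) (Fin dA) ℂ) ⊗ₖ (1 : Matrix (Fin dA) (Fin dA) ℂ)
        + ∑ k : Fin dA, ∑ l : Fin dA,
            (Matrix.single k l (1 : ℂ)) ⊗ₖ (Matrix.single l k (1 : ℂ))) :
    ∑ t : Fin (dA + 1), ∑ i : Fin dA,
        skewInfo ρAB hρAB
          ((vecMulVec (b t i) (star (b t i))) ⊗ₖ (1 : Matrix (Fin dB) (Fin dB) ℂ))
      = (dA : ℂ) - (trA hρAB.sqrt * trA hρAB.sqrt).trace := by
  classical
  set S := hρAB.sqrt with hSdef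
  have hS2 : S * S = ρAB := hρAB.sqrt_mul_self
  -- entrywise design identity
  have E : ∀ a b' c d : Fin dA,
      ∑ t : Fin (dA+1), ∑ i : Fin dA,
        (b t i a * star (b t i b')) * (b t i c * star (b t i d))
      = (if a = b' then if c = d then (1:ℂ) else 0 else 0)
        + (if a = d then if b' = c then (1:ℂ) else 0 else 0) := by
    intro a b' c d
    have h := congrFun (congrFun hdesign (a, c)) (b', d)
    simpa [Matrix.sum_apply, kroneckerMap_apply, vecMulVec_apply, Matrix.one_apply,
      Matrix.single, Matrix.add_apply, Finset.sum_ite_eq, Finset.sum_ite_eq',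
      ite_and, Pi.star_apply, eq_comm, mul_comm] using h.symm
  -- Σ P² = (dA+1) • 1
  have hPP : ∑ t : Fin (dA+1), ∑ i : Fin dA,
      (vecMulVec (b t i) (star (b t i))) * (vecMulVec (b t i) (star (b t i)))
      = ((dA : ℂ) + 1) • (1 : Matrix (Fin dA) (Fin dA) ℂ) := by
    ext a d
    simp only [Matrix.sum_apply, Matrix.mul_apply, vecMulVec_apply, Pi.star_apply]
    rw [swap3']
    have h : ∀ c : Fin dA, (∑ t : Fin (dA+1), ∑ i : Fin dA,
        b t i a * star (b t i c) * (b t i c * star (b t i d)))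
        = (if a = c then if c = d then (1:ℂ) else 0 else 0)
          + (if a = d then if c = c then (1:ℂ) else 0 else 0) := fun c => E a c c d
    rw [Finset.sum_congr rfl fun c _ => h c]
    simp [Finset.sum_ite_eq, Finset.sum_ite_eq', Matrix.smul_apply, Matrix.one_apply,
      Finset.sum_add_distrib]
    split_ifs <;> ring
  -- the channel identity: Σ O S O = S + 1 ⊗ₖ trA S
  have hPhi : ∑ t : Fin (dA+1), ∑ i : Fin dA,
      ((vecMulVec (b t i) (star (b t i))) ⊗ₖ (1 : Matrix (Fin dB) (Fin dB) ℂ)) * S *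
      ((vecMulVec (b t i) (star (b t i))) ⊗ₖ (1 : Matrix (Fin dB) (Fin dB) ℂ))
      = S + (1 : Matrix (Fin dA) (Fin dA) ℂ) ⊗ₖ trA S := by
    ext p s
    have entry : ∀ (A B C : Matrix (Fin dA × Fin dB) (Fin dA × Fin dB) ℂ),
        (A*B*C) p s = ∑ r, ∑ q, A p q * B q r * C r s := by
      intro A B C; simp [Matrix.mul_apply, Finset.sum_mul]
    simp only [Matrix.sum_apply, entry]
    rw [swap3']
    conv_lhs => rw [Finset.sum_congr rfl fun r _ => swap3' _]
    have hqr : ∀ r q : Fin dA × Fin dB,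
        (∑ t : Fin (dA+1), ∑ i : Fin dA,
          ((vecMulVec (b t i) (star (b t i))) ⊗ₖ (1:Matrix (Fin dB) (Fin dB) ℂ)) p q * S q r
            * ((vecMulVec (b t i) (star (b t i))) ⊗ₖ (1:Matrix (Fin dB) (Fin dB) ℂ)) r s)
        = ((if p.1 = q.1 then if r.1 = s.1 then (1:ℂ) else 0 else 0)
            + (if p.1 = s.1 then if q.1 = r.1 then (1:ℂ) else 0 else 0))
          * ((1:Matrix (Fin dB) (Fin dB) ℂ) p.2 q.2 * S q r
            * (1:Matrix (Fin dB) (Fin dB) ℂ) r.2 s.2) := by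
      intro r q
      rw [← E p.1 q.1 r.1 s.1, Finset.sum_mul]
      refine Finset.sum_congr rfl fun t _ => ?_
      rw [Finset.sum_mul]
      refine Finset.sum_congr rfl fun i _ => ?_
      simp only [kroneckerMap_apply, vecMulVec_apply, Pi.star_apply]
      ring
    simp only [hqr]
    obtain ⟨p1, p2⟩ := p; obtain ⟨s1, s2⟩ := s
    simp [Fintype.sum_prod_type, Matrix.one_apply, add_mul, Finset.sum_add_distrib,
      mul_ite, ite_mul, Finset.sum_ite_eq, Finset.sum_ite_eq', trA, kroneckerMap_apply,
      Finset.mul_sum, Matrix.add_apply]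
  -- rewrite each skew information term
  rw [Finset.sum_congr rfl fun t _ => Finset.sum_congr rfl fun i _ =>
    skewInfo_eq ρAB hρAB _]
  rw [Finset.sum_congr rfl fun t _ => Finset.sum_sub_distrib _ _, Finset.sum_sub_distrib]
  -- first part
  have partA : ∑ t : Fin (dA+1), ∑ i : Fin dA,
      (((vecMulVec (b t i) (star (b t i))) ⊗ₖ (1 : Matrix (Fin dB) (Fin dB) ℂ))
        * ((vecMulVec (b t i) (star (b t i))) ⊗ₖ (1 : Matrix (Fin dB) (Fin dB) ℂ)) * ρAB).trace
      = (dA : ℂ) + 1 := by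
    simp only [← Matrix.trace_sum, ← Finset.sum_mul]
    have : ∑ t : Fin (dA+1), ∑ i : Fin dA,
        ((vecMulVec (b t i) (star (b t i))) ⊗ₖ (1 : Matrix (Fin dB) (Fin dB) ℂ))
          * ((vecMulVec (b t i) (star (b t i))) ⊗ₖ (1 : Matrix (Fin dB) (Fin dB) ℂ))
        = ((dA : ℂ) + 1) • (1 : Matrix (Fin dA × Fin dB) (Fin dA × Fin dB) ℂ) := by
      calc ∑ t : Fin (dA+1), ∑ i : Fin dA,
          ((vecMulVec (b t i) (star (b t i))) ⊗ₖ (1 : Matrix (Fin dB) (Fin dB) ℂ))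
            * ((vecMulVec (b t i) (star (b t i))) ⊗ₖ (1 : Matrix (Fin dB) (Fin dB) ℂ))
          = ∑ t : Fin (dA+1), ∑ i : Fin dA,
            ((vecMulVec (b t i) (star (b t i))) * (vecMulVec (b t i) (star (b t i)))) ⊗ₖ
              ((1 : Matrix (Fin dB) (Fin dB) ℂ) * 1) := by
            refine Finset.sum_congr rfl fun t _ => Finset.sum_congr rfl fun i _ => ?_
            rw [Matrix.mul_kronecker_mul]
        _ = (∑ t : Fin (dA+1), ∑ i : Fin dA,
              (vecMulVec (b t i) (star (b t i))) * (vecMulVec (b t i) (star (b t i)))) ⊗ₖ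
              (1 : Matrix (Fin dB) (Fin dB) ℂ) := by
            rw [one_mul, sum_kron]
            exact Finset.sum_congr rfl fun t _ => (sum_kron _ _).symm
        _ = (((dA : ℂ) + 1) • (1 : Matrix (Fin dA) (Fin dA) ℂ)) ⊗ₖ
              (1 : Matrix (Fin dB) (Fin dB) ℂ) := by rw [hPP]
        _ = ((dA : ℂ) + 1) • (1 : Matrix (Fin dA × Fin dB) (Fin dA × Fin dB) ℂ) := by
            rw [Matrix.smul_kronecker, Matrix.one_kronecker_one]
    rw [this, Matrix.smul_mul, trace_smul, one_mul, htr, smul_eq_mul, mul_one]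
  -- second part
  have partB : ∑ t : Fin (dA+1), ∑ i : Fin dA,
      (S * ((vecMulVec (b t i) (star (b t i))) ⊗ₖ (1 : Matrix (Fin dB) (Fin dB) ℂ)) * S
        * ((vecMulVec (b t i) (star (b t i))) ⊗ₖ (1 : Matrix (Fin dB) (Fin dB) ℂ))).trace
      = 1 + (trA S * trA S).trace := by
    have assoc : ∀ t i,
        S * ((vecMulVec (b t i) (star (b t i))) ⊗ₖ (1 : Matrix (Fin dB) (Fin dB) ℂ)) * S
          * ((vecMulVec (b t i) (star (b t i))) ⊗ₖ (1 : Matrix (Fin dB) (Fin dB) ℂ))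
        = S * (((vecMulVec (b t i) (star (b t i))) ⊗ₖ (1 : Matrix (Fin dB) (Fin dB) ℂ)) * S
          * ((vecMulVec (b t i) (star (b t i))) ⊗ₖ (1 : Matrix (Fin dB) (Fin dB) ℂ))) := by
      intro t i; noncomm_ring
    simp only [assoc]
    simp only [← Matrix.trace_sum, ← Finset.mul_sum]
    rw [hPhi, Matrix.mul_add, trace_add, hS2, htr, trace_one_kron]
  rw [partA, partB]
  ring
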